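/- The holonomy group of Didi is the Klein four-group: the image of Γ_D under the linear-part homomorphism Lin : Isom(ℝ³) → O(3) is exactly {I, diag(1,−1,−1), diag(−1,1,−1), diag(−1,−1,1)}; in particular this image has order 4 and every element of it squares to the identity (so it is isomorphic to ℤ/2ℤ × ℤ/2ℤ, and in particular Γ_D contains no element whose linear part has order 4). -/

import Mathlib

noncomputable section

/-- Points of `ℝ³`, written as `(x, y, z)`. -/
abbrev R3 : Type := ℝ × ℝ × ℝ

/-- The translation `T_w : x ↦ x + w` of `ℝ³`, as a bijection (it is an isometry). -/
def transl (w : R3) : Equiv.Perm R3 := Equiv.addRight w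

/-- The quarter-turn screw motion `τ(x,y,z) = (−y, x, z+1/2)`, as a bijection
(it is an isometry). -/
def tauE : Equiv.Perm R3 where
  toFun p := (-p.2.1, p.1, p.2.2 + 1/2)
  invFun p := (p.2.1, -p.1, p.2.2 - 1/2)
  left_inv p := by obtain ⟨x, y, z⟩ := p; simp
  right_inv p := by obtain ⟨x, y, z⟩ := p; simp

/-- The half-turn screw motion `ρ_x(x,y,z) = (x+1/2, −y, −z)`, as a bijection
(it is an isometry). -/
def rhoxE : Equiv.Perm R3 where
  toFun p := (p.1 + 1/2, -p.2.1, -p.2.2)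
  invFun p := (p.1 - 1/2, -p.2.1, -p.2.2)
  left_inv p := by obtain ⟨x, y, z⟩ := p; simp
  right_inv p := by obtain ⟨x, y, z⟩ := p; simp

/-- The half-turn screw motion `ρ_y(x,y,z) = (−x, y+1/2, 1−z)`, as a bijection
(it is an isometry). -/
def rhoyE : Equiv.Perm R3 where
  toFun p := (-p.1, p.2.1 + 1/2, 1 - p.2.2)
  invFun p := (-p.1, p.2.1 - 1/2, 1 - p.2.2)
  left_inv p := by obtain ⟨x, y, z⟩ := p; simp
  right_inv p := by obtain ⟨x, y, z⟩ := p; simp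

/-- `Γ_T`, the covering group of the tetracosm Tetra: the group generated by the
translations `T_{(1,0,0)}, T_{(0,1,0)}, T_{(0,0,2)}` and `τ`. -/
def GammaT : Subgroup (Equiv.Perm R3) :=
  Subgroup.closure {transl (1, 0, 0), transl (0, 1, 0), transl (0, 0, 2), tauE}

/-- `Γ_D`, the covering group of the didicosm Didi: the group generated by the
translations `T_{(1,0,0)}, T_{(0,1,0)}, T_{(0,0,2)}` and `ρ_x`, `ρ_y`. -/
def GammaD : Subgroup (Equiv.Perm R3) :=
  Subgroup.closure {transl (1, 0, 0), transl (0, 1, 0), transl (0, 0, 2), rhoxE, rhoyE}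

end
/-- The diagonal orthogonal map `diag(a,b,c) : (x,y,z) ↦ (ax, by, cz)` as a linear map. -/
def diagLin (a b c : ℝ) : R3 →ₗ[ℝ] R3 where
  toFun p := (a * p.1, b * p.2.1, c * p.2.2)
  map_add' p q := by simp [Prod.ext_iff]; refine ⟨by ring, by ring, by ring⟩
  map_smul' r p := by simp [Prod.ext_iff]; refine ⟨by ring, by ring, by ring⟩


/-!
Every generator of `Γ_D` is an affine map whose linear part is a diagonal sign matrix of
determinant `1`: the translations have linear part `I`, `ρ_x` has `diag(1,−1,−1)` and `ρ_y` has
`diag(−1,1,−1)`. These four sign matrices form a group `K` of involutions, so the affine maps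
with linear part in `K` are closed under products and inverses, whence `Lin(Γ_D) ⊆ K`.
Conversely `1`, `ρ_x`, `ρ_y` and `ρ_x ρ_y` realise all four elements of `K`.
-/

section LinearPart

variable {R V : Type*} [Semiring R] [AddCommGroup V] [Module R V]

def HasLinearPart (γ : Equiv.Perm V) (A : V →ₗ[R] V) : Prop :=
  ∃ b : V, ∀ x : V, γ x = A x + b

theorem hasLinearPart_one : HasLinearPart (1 : Equiv.Perm V) (LinearMap.id : V →ₗ[R] V) :=
  ⟨0, fun _ => by simp⟩

theorem hasLinearPart_addRight (w : V) :
    HasLinearPart (Equiv.addRight w) (LinearMap.id : V →ₗ[R] V) :=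
  ⟨w, fun _ => rfl⟩

namespace HasLinearPart

variable {γ δ : Equiv.Perm V} {A B : V →ₗ[R] V}

theorem mul (hγ : HasLinearPart γ A) (hδ : HasLinearPart δ B) :
    HasLinearPart (γ * δ) (A ∘ₗ B) := by
  obtain ⟨a, ha⟩ := hγ
  obtain ⟨b, hb⟩ := hδ
  refine ⟨A b + a, fun x => ?_⟩
  rw [Equiv.Perm.mul_apply, hb, ha, map_add, LinearMap.comp_apply, add_assoc]

theorem inv (hγ : HasLinearPart γ A) (hBA : B ∘ₗ A = LinearMap.id) :
    HasLinearPart γ⁻¹ B := by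
  obtain ⟨a, ha⟩ := hγ
  refine ⟨-B a, fun x => ?_⟩
  obtain ⟨y, rfl⟩ := γ.surjective x
  rw [Equiv.Perm.inv_def, Equiv.symm_apply_apply, ha, map_add, ← LinearMap.comp_apply, hBA,
    LinearMap.id_apply, add_neg_cancel_right]

theorem unique (hA : HasLinearPart γ A) (hB : HasLinearPart γ B) : A = B := by
  obtain ⟨a, ha⟩ := hA
  obtain ⟨b, hb⟩ := hB
  have hab : a = b := by simpa using (ha 0).symm.trans (hb 0)
  exact LinearMap.ext fun x => add_right_cancel ((ha x).symm.trans (hab ▸ hb x))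

end HasLinearPart

end LinearPart

theorem diagLin_apply (a b c : ℝ) (p : R3) :
    diagLin a b c p = (a * p.1, b * p.2.1, c * p.2.2) := rfl

theorem diagLin_one_one_one : diagLin 1 1 1 = LinearMap.id :=
  LinearMap.ext fun p => by simp [diagLin_apply]

theorem diagLin_comp_diagLin (a b c a' b' c' : ℝ) :
    diagLin a b c ∘ₗ diagLin a' b' c' = diagLin (a * a') (b * b') (c * c') :=
  LinearMap.ext fun p => by simp only [LinearMap.comp_apply, diagLin_apply, mul_assoc]

@[simp]
theorem diagLin_inj {a b c a' b' c' : ℝ} :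
    diagLin a b c = diagLin a' b' c' ↔ a = a' ∧ b = b' ∧ c = c' := by
  refine ⟨fun h => ?_, by rintro ⟨rfl, rfl, rfl⟩; rfl⟩
  simpa [diagLin_apply] using LinearMap.congr_fun h (1, 1, 1)

def kleinFour : Set (R3 →ₗ[ℝ] R3) :=
  {LinearMap.id, diagLin 1 (-1) (-1), diagLin (-1) 1 (-1), diagLin (-1) (-1) 1}

theorem comp_mem_kleinFour {A B : R3 →ₗ[ℝ] R3} (hA : A ∈ kleinFour) (hB : B ∈ kleinFour) :
    A ∘ₗ B ∈ kleinFour := by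
  simp only [kleinFour, Set.mem_insert_iff, Set.mem_singleton_iff, ← diagLin_one_one_one] at *
  rcases hA with rfl | rfl | rfl | rfl <;> rcases hB with rfl | rfl | rfl | rfl <;>
    norm_num [diagLin_comp_diagLin]

theorem comp_self_of_mem_kleinFour {A : R3 →ₗ[ℝ] R3} (hA : A ∈ kleinFour) :
    A ∘ₗ A = LinearMap.id := by
  simp only [kleinFour, Set.mem_insert_iff, Set.mem_singleton_iff] at hA
  rcases hA with rfl | rfl | rfl | rfl <;>
    norm_num [diagLin_comp_diagLin, ← diagLin_one_one_one]

theorem ncard_kleinFour : kleinFour.ncard = 4 := by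
  rw [kleinFour, ← diagLin_one_one_one, Set.ncard_insert_of_notMem, Set.ncard_insert_of_notMem,
    Set.ncard_pair] <;> norm_num

theorem hasLinearPart_rhoxE : HasLinearPart rhoxE (diagLin 1 (-1) (-1)) :=
  ⟨(1/2, 0, 0), fun x => by simp [rhoxE, diagLin_apply]⟩

theorem hasLinearPart_rhoyE : HasLinearPart rhoyE (diagLin (-1) 1 (-1)) :=
  ⟨(0, 1/2, 1), fun x => by simp [rhoyE, diagLin_apply]; ring⟩

theorem exists_linearPart_mem_kleinFour {γ : Equiv.Perm R3} (hγ : γ ∈ GammaD) :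
    ∃ A ∈ kleinFour, HasLinearPart γ A := by
  have hid : LinearMap.id ∈ kleinFour := Or.inl rfl
  induction hγ using Subgroup.closure_induction with
  | mem g hg =>
    simp only [Set.mem_insert_iff, Set.mem_singleton_iff] at hg
    rcases hg with rfl | rfl | rfl | rfl | rfl
    iterate 3 exact ⟨_, hid, hasLinearPart_addRight _⟩
    · exact ⟨_, Or.inr (Or.inl rfl), hasLinearPart_rhoxE⟩
    · exact ⟨_, Or.inr (Or.inr (Or.inl rfl)), hasLinearPart_rhoyE⟩
  | one => exact ⟨_, hid, hasLinearPart_one⟩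
  | mul g h _ _ ihg ihh =>
    obtain ⟨A, hA, hg⟩ := ihg
    obtain ⟨B, hB, hh⟩ := ihh
    exact ⟨_, comp_mem_kleinFour hA hB, hg.mul hh⟩
  | inv g _ ihg =>
    obtain ⟨A, hA, hg⟩ := ihg
    exact ⟨A, hA, hg.inv (comp_self_of_mem_kleinFour hA)⟩

theorem exists_mem_gammaD_hasLinearPart {A : R3 →ₗ[ℝ] R3} (hA : A ∈ kleinFour) :
    ∃ γ ∈ GammaD, HasLinearPart γ A := by
  have hx : rhoxE ∈ GammaD := Subgroup.subset_closure (by simp)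
  have hy : rhoyE ∈ GammaD := Subgroup.subset_closure (by simp)
  rcases hA with rfl | rfl | rfl | rfl
  · exact ⟨1, one_mem _, hasLinearPart_one⟩
  · exact ⟨rhoxE, hx, hasLinearPart_rhoxE⟩
  · exact ⟨rhoyE, hy, hasLinearPart_rhoyE⟩
  · have hxy := hasLinearPart_rhoxE.mul hasLinearPart_rhoyE
    norm_num [diagLin_comp_diagLin] at hxy
    exact ⟨rhoxE * rhoyE, mul_mem hx hy, hxy⟩

/-- the holonomy group of Didi is the Klein four-group: the image of
`Γ_D` under the linear-part homomorphism is exactly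
`{I, diag(1,−1,−1), diag(−1,1,−1), diag(−1,−1,1)}`; this image has 4 elements and
every element of it squares to the identity, so it is isomorphic to `ℤ/2 × ℤ/2` (in
particular `Γ_D` contains no element whose linear part has order 4). -/
theorem holonomy_didi :
    (∀ γ ∈ GammaD, ∃ A ∈ ({LinearMap.id, diagLin 1 (-1) (-1), diagLin (-1) 1 (-1),
        diagLin (-1) (-1) 1} : Set (R3 →ₗ[ℝ] R3)),
      ∃ b : R3, ∀ x : R3, γ x = A x + b) ∧
    (∀ γ ∈ GammaD, ∀ (A : R3 →ₗ[ℝ] R3) (b : R3), (∀ x : R3, γ x = A x + b) →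
      A ∈ ({LinearMap.id, diagLin 1 (-1) (-1), diagLin (-1) 1 (-1),
        diagLin (-1) (-1) 1} : Set (R3 →ₗ[ℝ] R3))) ∧
    (∀ A ∈ ({LinearMap.id, diagLin 1 (-1) (-1), diagLin (-1) 1 (-1),
        diagLin (-1) (-1) 1} : Set (R3 →ₗ[ℝ] R3)),
      ∃ γ ∈ GammaD, ∃ b : R3, ∀ x : R3, γ x = A x + b) ∧
    Set.ncard ({LinearMap.id, diagLin 1 (-1) (-1), diagLin (-1) 1 (-1),
        diagLin (-1) (-1) 1} : Set (R3 →ₗ[ℝ] R3)) = 4 ∧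
    (∀ A ∈ ({LinearMap.id, diagLin 1 (-1) (-1), diagLin (-1) 1 (-1),
        diagLin (-1) (-1) 1} : Set (R3 →ₗ[ℝ] R3)), A ∘ₗ A = LinearMap.id) := by
  refine ⟨fun γ hγ => exists_linearPart_mem_kleinFour hγ, fun γ hγ A b hAb => ?_,
    fun A hA => exists_mem_gammaD_hasLinearPart hA, ncard_kleinFour,
    fun A hA => comp_self_of_mem_kleinFour hA⟩
  obtain ⟨B, hB, hγB⟩ := exists_linearPart_mem_kleinFour hγ
  rwa [HasLinearPart.unique ⟨b, hAb⟩ hγB]
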